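/- arXiv:1606.06478 — 2 statements merged into one kernel-verified Lean document; each statement's English description precedes it below -/
import Mathlib

section
/- Let N be a finitely generated, semipositive binoid. Then HKF(N^sep, q) = HKF(N, q) for all q, where N^sep = N/⋂ₙ nN₊ is the separation; that is, N^sep/[q](N^sep)₊ ≅ N/[q]N₊. -/
/-!  Basic theory of (commutative) binoids: a commutative monoid together with
an absorbing element `infty`.  We use a bundled structure `BinoidOn X`. -/

structure BinoidOn (X : Type u) where
  add : X → X → X
  zero : X
  infty : X
  add_assoc : ∀ a b c : X, add (add a b) c = add a (add b c)
  add_comm : ∀ a b : X, add a b = add b a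
  zero_add : ∀ a : X, add zero a = a
  infty_add : ∀ a : X, add infty a = infty

namespace BinoidOn

variable {X : Type u} {Y : Type v} (B : BinoidOn X) (C : BinoidOn Y)

/-- `n`-fold multiple `n • a`. -/
def smul (B : BinoidOn X) : ℕ → X → X
  | 0, _ => B.zero
  | n + 1, a => B.add a (smul B n a)

/-- Sum of a list of elements. -/
def listSum (l : List X) : X := l.foldr B.add B.zero

/-- An ideal of a binoid: a nonempty subset `I` with `I + N ⊆ I`. -/
def IsIdeal (I : Set X) : Prop := I.Nonempty ∧ ∀ a ∈ I, ∀ x : X, B.add a x ∈ I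

/-- A subbinoid: a submonoid containing `infty`. -/
def IsSubbinoid (M : Set X) : Prop :=
  B.zero ∈ M ∧ B.infty ∈ M ∧ ∀ a ∈ M, ∀ b ∈ M, B.add a b ∈ M

/-- The set of units. -/
def unitsSet : Set X := {u | ∃ a, B.add u a = B.zero}

/-- `N₊`, the ideal of non-units. -/
def nplus : Set X := (B.unitsSet)ᶜ

/-- The ideal generated by a set. -/
def genIdeal (S : Set X) : Set X := {x | ∃ a ∈ S, ∃ n, x = B.add a n}

/-- The `n`-fold sum `nI = {a₁ + ⋯ + aₙ | aᵢ ∈ I}`. -/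
def nSum (n : ℕ) (I : Set X) : Set X :=
  {x | ∃ l : List X, l.length = n ∧ (∀ a ∈ l, a ∈ I) ∧ x = B.listSum l}

/-- The Frobenius power `[q]I`: the ideal generated by `{q • a | a ∈ I}`. -/
def frob (q : ℕ) (I : Set X) : Set X := B.genIdeal {x | ∃ a ∈ I, x = B.smul q a}

/-- The radical of an ideal. -/
def radical (I : Set X) : Set X := {a | ∃ n : ℕ, 0 < n ∧ B.smul n a ∈ I}

/-- `N₊`-primary ideal. -/
def IsPrimary (I : Set X) : Prop := B.radical I = B.nplus

/-- Finitely generated binoid. -/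
def FG : Prop :=
  ∃ G : Finset X, ∀ x : X, x = B.infty ∨ ∃ l : List X, (∀ a ∈ l, a ∈ G) ∧ x = B.listSum l

/-- Semipositive: a nonzero binoid with finitely many units. -/
def Semipositive : Prop := B.zero ≠ B.infty ∧ B.unitsSet.Finite

/-- Prime ideal. -/
def IsPrime (P : Set X) : Prop :=
  B.IsIdeal P ∧ P ≠ Set.univ ∧ ∀ a b : X, B.add a b ∈ P → a ∈ P ∨ b ∈ P

/-- The (combinatorial) dimension of the binoid is `d`: there is a strictly
increasing chain of prime ideals of length `d`, and no longer one. -/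
def HasDim (d : ℕ) : Prop :=
  (∃ c : Fin (d + 1) → Set X, StrictMono c ∧ ∀ i, B.IsPrime (c i)) ∧
    ∀ (k : ℕ) (c : Fin (k + 1) → Set X), StrictMono c → (∀ i, B.IsPrime (c i)) → k ≤ d

end BinoidOn

/-- The setoid collapsing a subset `A` to a single point (Rees congruence). -/
def collapseSetoid {X : Type u} (A : Set X) : Setoid X where
  r x y := x = y ∨ (x ∈ A ∧ y ∈ A)
  iseqv := ⟨fun _ => Or.inl rfl,
    fun h => h.elim (fun e => Or.inl e.symm) (fun h => Or.inr ⟨h.2, h.1⟩),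
    fun h1 h2 => by
      rcases h1 with rfl | h1
      · exact h2
      · rcases h2 with rfl | h2
        · exact Or.inr h1
        · exact Or.inr ⟨h1.1, h2.2⟩⟩

namespace BinoidOn

variable {X : Type u} {Y : Type v} (B : BinoidOn X) (C : BinoidOn Y)

/-- The underlying set of the Rees quotient `N/I` (we collapse the ideal
generated by `I`; for an ideal `I` this is `I` itself). -/
abbrev ReesQuot (I : Set X) : Type u := Quotient (collapseSetoid (B.genIdeal I))

lemma genIdeal_closed {I : Set X} {a : X} (ha : a ∈ B.genIdeal I) (x : X) :
    B.add a x ∈ B.genIdeal I := by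
  obtain ⟨b, hb, n, rfl⟩ := ha
  exact ⟨b, hb, B.add n x, (B.add_assoc b n x)⟩

/-- The Rees quotient binoid `N/I`. -/
def quotB (I : Set X) : BinoidOn (B.ReesQuot I) where
  add := Quotient.map₂ B.add (by
    rintro a a' (rfl | ⟨ha, ha'⟩) b b' (rfl | ⟨hb, hb'⟩)
    · exact Or.inl rfl
    · exact Or.inr ⟨by rw [B.add_comm]; exact B.genIdeal_closed hb _,
        by rw [B.add_comm]; exact B.genIdeal_closed hb' _⟩
    · exact Or.inr ⟨B.genIdeal_closed ha _, B.genIdeal_closed ha' _⟩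
    · exact Or.inr ⟨B.genIdeal_closed ha _, B.genIdeal_closed ha' _⟩)
  zero := Quotient.mk _ B.zero
  infty := Quotient.mk _ B.infty
  add_assoc := by
    rintro ⟨a⟩ ⟨b⟩ ⟨c⟩
    exact congrArg (Quotient.mk _) (B.add_assoc a b c)
  add_comm := by
    rintro ⟨a⟩ ⟨b⟩
    exact congrArg (Quotient.mk _) (B.add_comm a b)
  zero_add := by
    rintro ⟨a⟩
    exact congrArg (Quotient.mk _) (B.zero_add a)
  infty_add := by
    rintro ⟨a⟩
    exact congrArg (Quotient.mk _) (B.infty_add a)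

/-- The underlying set of `N/[q]N₊`. -/
abbrev hkQuot (q : ℕ) : Type u := Quotient (collapseSetoid (B.frob q B.nplus))

/-- The Hilbert–Kunz function `HKF(N,q) = #(N/[q]N₊)`, where `#S = |S| - 1`. -/
noncomputable def hkf (q : ℕ) : ℕ := Nat.card (B.hkQuot q) - 1

/-- Pairs with an `infty` coordinate. -/
def inftyPairs : Set (X × Y) := {p | p.1 = B.infty ∨ p.2 = C.infty}

/-- Carrier of the smash product `M ∧ N`. -/
abbrev SmashCarrier : Type _ := Quotient (collapseSetoid (B.inftyPairs C))

lemma inftyPairs_add_left {p q : X × Y} (hp : p ∈ B.inftyPairs C) :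
    (B.add p.1 q.1, C.add p.2 q.2) ∈ B.inftyPairs C := by
  rcases hp with h | h
  · exact Or.inl (by rw [h, B.infty_add])
  · exact Or.inr (by rw [h, C.infty_add])

lemma inftyPairs_add_right {p q : X × Y} (hq : q ∈ B.inftyPairs C) :
    (B.add p.1 q.1, C.add p.2 q.2) ∈ B.inftyPairs C := by
  rcases hq with h | h
  · exact Or.inl (by rw [h, B.add_comm, B.infty_add])
  · exact Or.inr (by rw [h, C.add_comm, C.infty_add])

/-- The smash product binoid `M ∧ N`. -/
def smash : BinoidOn (B.SmashCarrier C) where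
  add := Quotient.map₂ (fun p q => (B.add p.1 q.1, C.add p.2 q.2)) (by
    rintro p p' (rfl | ⟨hp, hp'⟩) q q' (rfl | ⟨hq, hq'⟩)
    · exact Or.inl rfl
    · exact Or.inr ⟨B.inftyPairs_add_right C hq, B.inftyPairs_add_right C hq'⟩
    · exact Or.inr ⟨B.inftyPairs_add_left C hp, B.inftyPairs_add_left C hp'⟩
    · exact Or.inr ⟨B.inftyPairs_add_left C hp, B.inftyPairs_add_left C hp'⟩)
  zero := Quotient.mk _ (B.zero, C.zero)
  infty := Quotient.mk _ (B.infty, C.infty)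
  add_assoc := by
    rintro ⟨a⟩ ⟨b⟩ ⟨c⟩
    exact congrArg (Quotient.mk _)
      (Prod.ext (B.add_assoc _ _ _) (C.add_assoc _ _ _))
  add_comm := by
    rintro ⟨a⟩ ⟨b⟩
    exact congrArg (Quotient.mk _)
      (Prod.ext (B.add_comm _ _) (C.add_comm _ _))
  zero_add := by
    rintro ⟨a⟩
    exact congrArg (Quotient.mk _)
      (Prod.ext (B.zero_add _) (C.zero_add _))
  infty_add := by
    rintro ⟨a⟩
    exact congrArg (Quotient.mk _)
      (Prod.ext (B.infty_add _) (C.infty_add _))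

end BinoidOn

/-- An `N`-set: a pointed set with an operation of the binoid. -/
structure NSetOn {X : Type u} (B : BinoidOn X) (S : Type w) where
  pt : S
  act : X → S → S
  act_zero : ∀ s, act B.zero s = s
  act_infty : ∀ s, act B.infty s = pt
  act_pt : ∀ n, act n pt = pt
  act_add : ∀ n m s, act (B.add n m) s = act n (act m s)

section NSet

variable {X : Type u} {S : Type w} {B : BinoidOn X}

/-- One step of the connectedness relation on `S ∖ {p}`. -/
def NStep (σ : NSetOn B S) (s t : S) : Prop :=
  s ≠ σ.pt ∧ t ≠ σ.pt ∧ ∃ n, n ≠ B.infty ∧ (σ.act n s = t ∨ σ.act n t = s)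

/-- The connectedness (equivalence) relation `∼_N` on `S ∖ {p}`. -/
def NConn (σ : NSetOn B S) : S → S → Prop := Relation.ReflTransGen (NStep σ)

/-- `N`-subsets of an `N`-set. -/
def IsNSubset (σ : NSetOn B S) (T : Set S) : Prop :=
  σ.pt ∈ T ∧ ∀ n : X, ∀ s ∈ T, σ.act n s ∈ T

/-- `T` is a pointed union of two nontrivial `N`-subsets. -/
def IsReducibleSet (σ : NSetOn B S) (T : Set S) : Prop :=
  ∃ A A' : Set S, IsNSubset σ A ∧ IsNSubset σ A' ∧
    A ≠ {σ.pt} ∧ A' ≠ {σ.pt} ∧ A ∪ A' = T ∧ A ∩ A' = {σ.pt}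

/-- An irreducible `N`-subset. -/
def IsIrreducibleSet (σ : NSetOn B S) (T : Set S) : Prop :=
  IsNSubset σ T ∧ T ≠ {σ.pt} ∧ ¬ IsReducibleSet σ T

end NSet

/-- The trivial binoid `{0, ∞}`, realized on `Bool` (`false = 0`, `true = ∞`). -/
def trivB : BinoidOn Bool where
  add := or
  zero := false
  infty := true
  add_assoc := by decide
  add_comm := by decide
  zero_add := by decide
  infty_add := by decide

/-- The binoid `M^∞` obtained from a commutative monoid by adjoining `∞ = ⊤`. -/
def withTopBinoid (M : Type u) [AddCommMonoid M] : BinoidOn (WithTop M) where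
  add := (· + ·)
  zero := 0
  infty := ⊤
  add_assoc := add_assoc
  add_comm := add_comm
  zero_add := zero_add
  infty_add := fun a => WithTop.top_add a

/-!
A non-unit other than `∞` is a sum `g + m` with `g` one of the finitely many non-unit generators.
So an `n`-fold sum of non-units with `n > (q - 1) · #generators` either is `∞` or, by pigeonhole,
contains some generator at least `q` times, and hence lies in `[q]N₊`: the ideal `⋂ₙ nN₊` is
contained in `[q]N₊`. It also consists of non-units, so `N` and `N^sep` have the same units and
`[q]N^sep₊` is the image of `[q]N₊`. Collapsing `⋂ₙ nN₊` before `[q]N₊` therefore does not change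
`N/[q]N₊`.
-/

open Finset

theorem Multiset.exists_sum_eq_nsmul_add {M : Type*} [AddCommMonoid M] {S : Finset M}
    {s : Multiset M} (q : ℕ) (hs : ∀ g ∈ s, g ∈ S) (hcard : (q - 1) * #S < Multiset.card s) :
    ∃ g ∈ S, ∃ m, s.sum = q • g + m := by
  classical
  have hsum : ∑ _g ∈ S, (q - 1) < ∑ g ∈ S, s.count g := by
    rwa [sum_const, smul_eq_mul, mul_comm, Multiset.sum_count_eq_card hs]
  obtain ⟨g, hgS, hg⟩ := exists_lt_of_sum_lt hsum
  obtain ⟨t, rfl⟩ :=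
    Multiset.le_iff_exists_add.1 (Multiset.le_count_iff_replicate_le.1 (by omega : q ≤ s.count g))
  exact ⟨g, hgS, t.sum, by rw [Multiset.sum_add, Multiset.sum_replicate]⟩

theorem List.exists_sum_eq_multiset_sum_add {M : Type*} [AddCommMonoid M] {S : Set M}
    {l : List M} (hl : ∀ b ∈ l, ∃ g ∈ S, ∃ m, b = g + m) :
    ∃ s : Multiset M, (∀ g ∈ s, g ∈ S) ∧ Multiset.card s = l.length ∧ ∃ m, l.sum = s.sum + m := by
  induction l with
  | nil => exact ⟨0, by simp, rfl, 0, by simp⟩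
  | cons b l ih =>
    obtain ⟨g, hg, m, rfl⟩ := hl b mem_cons_self
    obtain ⟨s, hsS, hcard, m', hm'⟩ := ih fun c hc => hl c (mem_cons_of_mem _ hc)
    refine ⟨g ::ₘ s, ?_, by simp [hcard], m + m', ?_⟩
    · simpa using ⟨hg, hsS⟩
    · rw [sum_cons, hm', Multiset.sum_cons, add_add_add_comm]

theorem List.exists_sum_eq_nsmul_add {M : Type*} [AddCommMonoid M] {S : Finset M}
    {l : List M} (q : ℕ) (hl : ∀ b ∈ l, ∃ g ∈ S, ∃ m, b = g + m)
    (hlen : (q - 1) * #S < l.length) :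
    ∃ g ∈ S, ∃ m, l.sum = q • g + m := by
  obtain ⟨s, hsS, hcard, m, hm⟩ := l.exists_sum_eq_multiset_sum_add hl
  obtain ⟨g, hgS, m', hm'⟩ := s.exists_sum_eq_nsmul_add q hsS (hcard ▸ hlen)
  exact ⟨g, hgS, m' + m, by rw [hm, hm', add_assoc]⟩

namespace BinoidOn

variable {X : Type u} (B : BinoidOn X)

theorem add_zero (a : X) : B.add a B.zero = a :=
  (B.add_comm a B.zero).trans (B.zero_add a)

-- Forgetting `∞`, a binoid is a commutative monoid in which `smul` and `listSum` are
-- definitionally `nsmul` and `List.sum`.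
@[reducible] def toAddCommMonoid : AddCommMonoid X where
  add := B.add
  zero := B.zero
  add_assoc := B.add_assoc
  zero_add := B.zero_add
  add_zero := B.add_zero
  add_comm := B.add_comm
  nsmul := B.smul
  nsmul_zero _ := rfl
  nsmul_succ n a := B.add_comm a (B.smul n a)

theorem add_infty (a : X) : B.add a B.infty = B.infty :=
  (B.add_comm a B.infty).trans (B.infty_add a)

theorem listSum_eq_infty {l : List X} (h : B.infty ∈ l) : B.listSum l = B.infty := by
  classical
  let := B.toAddCommMonoid
  exact (List.sum_erase h).symm.trans (B.infty_add _)

theorem infty_mem_frob {I : Set X} (h : B.infty ∈ I) (q : ℕ) : B.infty ∈ B.frob q I :=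
  ⟨B.smul q B.infty, ⟨B.infty, h, rfl⟩, B.infty, (B.add_infty _).symm⟩

theorem FG.exists_finset_nplus_add {B : BinoidOn X} (hfg : B.FG) :
    ∃ S : Finset X, (∀ g ∈ S, g ∈ B.nplus) ∧
      ∀ b ∈ B.nplus, b ≠ B.infty → ∃ g ∈ S, ∃ m, b = B.add g m := by
  classical
  let := B.toAddCommMonoid
  obtain ⟨G, hG⟩ := hfg
  refine ⟨G.filter (· ∈ B.nplus), fun g hg => (Finset.mem_filter.1 hg).2, fun b hb hbinf => ?_⟩
  obtain ⟨l, hlG, rfl⟩ := (hG b).resolve_left hbinf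
  have hunit (u : X) : u ∈ B.unitsSet ↔ IsAddUnit u := isAddUnit_iff_exists_neg.symm
  obtain ⟨g, hgl, hg⟩ : ∃ g ∈ l, ¬ IsAddUnit g := by
    simpa [List.sum_isAddUnit_iff] using (hunit l.sum).not.1 hb
  exact ⟨g, Finset.mem_filter.2 ⟨hlG g hgl, (hunit g).not.2 hg⟩,
    (l.erase g).sum, (List.sum_erase hgl).symm⟩

theorem exists_nSum_nplus_subset_frob (hfg : B.FG) (q : ℕ) :
    ∃ n, 1 ≤ n ∧ B.nSum n B.nplus ⊆ B.frob q B.nplus := by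
  let := B.toAddCommMonoid
  obtain ⟨S, hSN, hS⟩ := hfg.exists_finset_nplus_add
  refine ⟨(q - 1) * S.card + 1, by omega, ?_⟩
  rintro _ ⟨l, hlen, hl, rfl⟩
  by_cases hinf : B.infty ∈ l
  · rw [B.listSum_eq_infty hinf]
    exact B.infty_mem_frob (hl _ hinf) q
  · have hdecomp : ∀ b ∈ l, ∃ g ∈ S, ∃ m, b = g + m := fun b hb =>
      hS b (hl b hb) (ne_of_mem_of_not_mem hb hinf)
    obtain ⟨g, hgS, m, hm⟩ := l.exists_sum_eq_nsmul_add q hdecomp (by omega)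
    exact ⟨q • g, ⟨g, hSN g hgS, rfl⟩, m, hm⟩

def sepIdeal : Set X := ⋂ n ∈ Set.Ici 1, B.nSum n B.nplus

theorem nSum_one (I : Set X) : B.nSum 1 I = I := by
  ext x
  constructor
  · rintro ⟨l, hlen, hl, rfl⟩
    obtain ⟨a, rfl⟩ := List.length_eq_one_iff.1 hlen
    change B.add a B.zero ∈ I
    rw [B.add_zero]
    exact hl a List.mem_cons_self
  · intro hx
    exact ⟨[x], rfl, by simpa using hx, (B.add_zero x).symm⟩

theorem sepIdeal_subset_nplus : B.sepIdeal ⊆ B.nplus := fun _ hx =>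
  B.nSum_one B.nplus ▸ Set.mem_iInter₂.1 hx 1 Set.self_mem_Ici

theorem genIdeal_sepIdeal_subset_frob (hfg : B.FG) (q : ℕ) :
    B.genIdeal B.sepIdeal ⊆ B.frob q B.nplus := by
  obtain ⟨n, hn, hsub⟩ := B.exists_nSum_nplus_subset_frob hfg q
  rintro _ ⟨a, ha, m, rfl⟩
  exact B.genIdeal_closed (hsub (Set.mem_iInter₂.1 ha n hn)) m

end BinoidOn

section Collapse

variable {X : Type u} {A A' : Set X}

theorem collapseSetoid_mk_mem_image_iff (h : A ⊆ A') {x : X} :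
    Quotient.mk (collapseSetoid A) x ∈ Quotient.mk (collapseSetoid A) '' A' ↔ x ∈ A' := by
  refine ⟨?_, fun hx => ⟨x, hx, rfl⟩⟩
  rintro ⟨y, hy, hyx⟩
  rcases Quotient.exact hyx with rfl | ⟨-, hx⟩
  exacts [hy, h hx]

noncomputable def collapseSetoidQuotientEquiv (h : A ⊆ A') :
    Quotient (collapseSetoid A') ≃
      Quotient (collapseSetoid (Quotient.mk (collapseSetoid A) '' A')) := by
  refine Equiv.ofBijective (Quotient.map (Quotient.mk _) ?_) ⟨?_, ?_⟩
  · rintro x y (rfl | ⟨hx, hy⟩)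
    exacts [Or.inl rfl, Or.inr ⟨⟨x, hx, rfl⟩, ⟨y, hy, rfl⟩⟩]
  · rintro ⟨x⟩ ⟨y⟩ hxy
    refine Quotient.sound ?_
    rcases Quotient.exact hxy with hxy | ⟨hx, hy⟩
    · rcases Quotient.exact hxy with rfl | ⟨hx, hy⟩
      exacts [Or.inl rfl, Or.inr ⟨h hx, h hy⟩]
    · exact Or.inr ⟨(collapseSetoid_mk_mem_image_iff h).1 hx,
        (collapseSetoid_mk_mem_image_iff h).1 hy⟩
  · rintro ⟨⟨x⟩⟩
    exact ⟨Quotient.mk _ x, rfl⟩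

end Collapse

namespace BinoidOn

variable {X : Type u} (B : BinoidOn X) {I : Set X}

abbrev reesMk (I : Set X) (a : X) : B.ReesQuot I := Quotient.mk _ a

theorem quotB_smul_reesMk (n : ℕ) (a : X) :
    (B.quotB I).smul n (B.reesMk I a) = B.reesMk I (B.smul n a) := by
  induction n with
  | zero => rfl
  | succ n ih => exact congrArg ((B.quotB I).add (B.reesMk I a)) ih

theorem zero_notMem_genIdeal (hI : I ⊆ B.nplus) : B.zero ∉ B.genIdeal I := by
  rintro ⟨a, ha, m, hm⟩
  exact hI ha ⟨m, hm.symm⟩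

theorem reesMk_mem_unitsSet_quotB_iff (hI : I ⊆ B.nplus) {u : X} :
    B.reesMk I u ∈ (B.quotB I).unitsSet ↔ u ∈ B.unitsSet := by
  constructor
  · rintro ⟨⟨a⟩, ha⟩
    rcases Quotient.exact ha with h | ⟨-, h⟩
    exacts [⟨a, h⟩, absurd h (B.zero_notMem_genIdeal hI)]
  · rintro ⟨a, ha⟩
    exact ⟨B.reesMk I a, congrArg (B.reesMk I) ha⟩

theorem reesMk_mem_nplus_quotB_iff (hI : I ⊆ B.nplus) {u : X} :
    B.reesMk I u ∈ (B.quotB I).nplus ↔ u ∈ B.nplus :=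
  (B.reesMk_mem_unitsSet_quotB_iff hI).not

theorem frob_nplus_quotB (hI : I ⊆ B.nplus) (q : ℕ) :
    (B.quotB I).frob q (B.quotB I).nplus = B.reesMk I '' B.frob q B.nplus := by
  ext z
  constructor
  · rintro ⟨_, ⟨⟨a⟩, ha, rfl⟩, ⟨m⟩, rfl⟩
    exact ⟨B.add (B.smul q a) m, ⟨_, ⟨a, (B.reesMk_mem_nplus_quotB_iff hI).1 ha, rfl⟩, m, rfl⟩,
      (congrArg ((B.quotB I).add · (B.reesMk I m)) (B.quotB_smul_reesMk q a)).symm⟩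
  · rintro ⟨_, ⟨_, ⟨a, ha, rfl⟩, m, rfl⟩, rfl⟩
    exact ⟨_, ⟨B.reesMk I a, (B.reesMk_mem_nplus_quotB_iff hI).2 ha, rfl⟩, B.reesMk I m,
      (congrArg ((B.quotB I).add · (B.reesMk I m)) (B.quotB_smul_reesMk q a)).symm⟩

theorem hkf_quotB (hI : I ⊆ B.nplus) {q : ℕ} (hIq : B.genIdeal I ⊆ B.frob q B.nplus) :
    (B.quotB I).hkf q = B.hkf q := by
  unfold hkf hkQuot
  rw [B.frob_nplus_quotB hI q, ← Nat.card_congr (collapseSetoidQuotientEquiv hIq)]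

end BinoidOn

theorem stmt16_general {X : Type} (B : BinoidOn X) (hfg : B.FG) :
    ∀ q : ℕ, (B.quotB (⋂ n ∈ Set.Ici 1, B.nSum n B.nplus)).hkf q = B.hkf q := fun q =>
  B.hkf_quotB B.sepIdeal_subset_nplus (B.genIdeal_sepIdeal_subset_frob hfg q)

/-- For a finitely generated semipositive binoid `N`, the separation
`N^sep = N/⋂ₙ nN₊` has the same Hilbert–Kunz function as `N`. -/
theorem stmt16 {X : Type} (B : BinoidOn X) (hfg : B.FG) (hsp : B.Semipositive) :
    ∀ q : ℕ, (B.quotB (⋂ n ∈ Set.Ici 1, B.nSum n B.nplus)).hkf q = B.hkf q :=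
  stmt16_general B hfg
end

section
/- Let N be a numerical semigroup (with adjoined absorbing element ∞, regarded as a binoid) with smallest positive element n₁. Then for every integer q larger than every gap of N, #(N/[q]N₊) = q·n₁. -/
/-! If every gap of `S` is below `q` and `n₁` is the multiplicity, then
`[q]S₊ = {∞} ∪ (q n₁ + S)`: an element `q a + b` with `a > n₁` already lies in `q n₁ + S`,
because `q (a - n₁) + b ≥ q` is not a gap. The Rees quotient is therefore the Apéry set
`S ∖ (q n₁ + S)` plus one collapsed point. For `M` larger than every gap, `S ∖ (M + S)` is in
bijection with `[0, M)`: it consists of the elements of `S` below `M` and of `M + g` for the gaps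
`g`. Hence `#(N/[q]N₊) = q n₁`. -/

lemma card_quotient_collapseSetoid {X : Type*} {A : Set X} (hA : A.Nonempty) (hfin : Aᶜ.Finite) :
    Nat.card (Quotient (collapseSetoid A)) = Nat.card ↥Aᶜ + 1 := by
  classical
  obtain ⟨a, ha⟩ := hA
  have : Finite ↥Aᶜ := hfin
  let e : Quotient (collapseSetoid A) ≃ Option ↥Aᶜ :=
    { toFun := Quotient.lift (fun x => if hx : x ∈ A then none else some ⟨x, hx⟩) (by
        rintro x y (rfl | ⟨hx, hy⟩)
        · rfl
        · simp [hx, hy])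
      invFun := fun o => o.elim (Quotient.mk _ a) (fun x => Quotient.mk _ x)
      left_inv := Quotient.ind fun x => by
        by_cases hx : x ∈ A
        · simpa [hx] using Quotient.sound (Or.inr ⟨ha, hx⟩)
        · simp [hx]
      right_inv := by
        rintro (_ | ⟨x, hx⟩)
        · simp [ha]
        · simpa using hx }
  rw [Nat.card_congr e, Finite.card_option]

instance AddSubmonoid.subsingleton_addUnits {M : Type*} [AddMonoid M] [Subsingleton (AddUnits M)]
    {S : AddSubmonoid M} : Subsingleton (AddUnits S) :=
  .addUnits_of_isAddUnit fun _ ha ↦ Subtype.ext (ha.map S.subtype).eq_zero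

section WithTopBinoid

variable {M : Type*} [AddCommMonoid M]

lemma withTopBinoid_smul (n : ℕ) (x : WithTop M) : (withTopBinoid M).smul n x = n • x := by
  induction n with
  | zero => exact (zero_nsmul x).symm
  | succ n ih => exact (congrArg (x + ·) ih).trans (succ_nsmul' x n).symm

lemma withTopBinoid_nplus [Subsingleton (AddUnits M)] : (withTopBinoid M).nplus = {0}ᶜ := by
  refine Set.ext fun u => not_congr (?_ : (∃ a : WithTop M, u + a = 0) ↔ u = 0)
  refine ⟨fun ⟨a, ha⟩ => ?_, fun hu => ⟨0, hu ▸ add_zero (0 : WithTop M)⟩⟩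
  cases u with
  | top => exact absurd ha (by simp)
  | coe m =>
    cases a with
    | top => exact absurd ha (by simp)
    | coe b => exact congrArg _ (eq_zero_of_add_right (WithTop.coe_injective ha))

lemma withTopBinoid_top_mem_nplus : (⊤ : WithTop M) ∈ (withTopBinoid M).nplus :=
  fun ⟨a, ha⟩ => WithTop.top_ne_zero ((WithTop.top_add a).symm.trans ha)

lemma withTopBinoid_top_mem_frob (q : ℕ) {I : Set (WithTop M)} (hI : ⊤ ∈ I) :
    ⊤ ∈ (withTopBinoid M).frob q I :=
  ⟨_, ⟨⊤, hI, rfl⟩, ⊤, (WithTop.add_top _).symm⟩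

end WithTopBinoid

section NumericalSemigroup

variable {S : AddSubmonoid ℕ} {q : ℕ}

lemma isLeast_sInf_pos_of_gaps_lt (hq : ∀ m ∉ S, m < q) :
    IsLeast {m | m ∈ S ∧ 0 < m} (sInf {m | m ∈ S ∧ 0 < m}) := by
  have hne : {m | m ∈ S ∧ 0 < m}.Nonempty :=
    ⟨q + 1, not_not.mp fun h => absurd (hq _ h) (by omega), by omega⟩
  exact ⟨Nat.sInf_mem hne, fun _ hm => Nat.sInf_le hm⟩

lemma exists_mul_add_eq_mul_add {n₁ a b : ℕ} (hn₁ : IsLeast {m | m ∈ S ∧ 0 < m} n₁)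
    (hq : ∀ m ∉ S, m < q) (ha : a ∈ S) (ha₀ : 0 < a) (hb : b ∈ S) :
    ∃ t ∈ S, q * n₁ + t = q * a + b := by
  have hle : n₁ ≤ a := hn₁.2 ⟨ha, ha₀⟩
  refine ⟨q * (a - n₁) + b, ?_, by
    rw [Nat.mul_sub, ← Nat.add_assoc, Nat.add_sub_cancel' (Nat.mul_le_mul_left q hle)]⟩
  rcases Nat.eq_zero_or_pos (a - n₁) with h | h
  · simpa [h] using hb
  · have : q ≤ q * (a - n₁) := Nat.le_mul_of_pos_right q h
    exact not_not.mp fun hS => absurd (hq _ hS) (by omega)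

def aperySet (S : AddSubmonoid ℕ) (M : ℕ) : Set ℕ := {s | s ∈ S ∧ ∀ t ∈ S, M + t ≠ s}

open Finset Classical in
lemma aperySet_eq_of_gaps_lt {M : ℕ} (hM : ∀ m ∉ S, m < M) :
    aperySet S M = ↑({m ∈ range M | m ∈ S} ∪ {m ∈ range M | m ∉ S}.map (addLeftEmbedding M)) := by
  ext s
  simp only [aperySet, ne_eq, Set.mem_ofPred_eq, coe_union, coe_filter, mem_range, coe_map,
    addLeftEmbedding_apply, Set.mem_union, Set.mem_image]
  constructor
  · rintro ⟨hs, hnot⟩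
    by_cases hsM : s < M
    · exact Or.inl ⟨hsM, hs⟩
    · have hgap : s - M ∉ S := fun h => hnot _ h (by omega)
      exact Or.inr ⟨s - M, ⟨hM _ hgap, hgap⟩, by omega⟩
  · rintro (⟨hsM, hs⟩ | ⟨g, ⟨hgM, hg⟩, rfl⟩)
    · exact ⟨hs, fun t _ => by omega⟩
    · exact ⟨not_not.mp fun h => absurd (hM _ h) (by omega),
        fun t ht h => hg (Nat.add_left_cancel h ▸ ht)⟩

lemma finite_aperySet_of_gaps_lt {M : ℕ} (hM : ∀ m ∉ S, m < M) : (aperySet S M).Finite := by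
  classical
  exact aperySet_eq_of_gaps_lt hM ▸ Finset.finite_toSet _

lemma card_aperySet_of_gaps_lt {M : ℕ} (hM : ∀ m ∉ S, m < M) :
    Nat.card (aperySet S M) = M := by
  classical
  rw [aperySet_eq_of_gaps_lt hM, Nat.card_coe_set_eq, Set.ncard_coe_finset,
    Finset.card_union_of_disjoint, Finset.card_map, Finset.card_filter_add_card_filter_not,
    Finset.card_range]
  simp only [Finset.disjoint_left, Finset.mem_filter, Finset.mem_range, Finset.mem_map]
  rintro _ ⟨hlt, -⟩ ⟨g, -, rfl⟩
  simp at hlt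

lemma withTopBinoid_coe_mem_frob_nplus_iff {n₁ : ℕ} (hn₁ : IsLeast {m | m ∈ S ∧ 0 < m} n₁)
    (hq : ∀ m ∉ S, m < q) (s : S) :
    (s : WithTop S) ∈ (withTopBinoid S).frob q (withTopBinoid S).nplus ↔
      ∃ t ∈ S, q * n₁ + t = s := by
  simp only [BinoidOn.frob, BinoidOn.genIdeal, withTopBinoid_nplus, withTopBinoid_smul]
  constructor
  · rintro ⟨_, ⟨x, hx, rfl⟩, y, hxy⟩
    change (s : WithTop S) = q • x + y at hxy
    cases x with
    | top =>
      rcases Nat.eq_zero_or_pos q with rfl | hq₀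
      · exact ⟨s, s.2, by simp⟩
      · obtain ⟨k, rfl⟩ := Nat.exists_eq_add_one_of_ne_zero hq₀.ne'
        simp [succ_nsmul] at hxy
    | coe a =>
      cases y with
      | top => simp at hxy
      | coe b =>
        rw [← WithTop.coe_nsmul, ← WithTop.coe_add, WithTop.coe_inj] at hxy
        have ha₀ : 0 < (a : ℕ) :=
          Nat.pos_of_ne_zero fun h => hx (by simp [show a = 0 from Subtype.ext h])
        simpa [hxy] using exists_mul_add_eq_mul_add hn₁ hq a.2 ha₀ b.2
  · rintro ⟨t, ht, hts⟩
    refine ⟨_, ⟨((⟨n₁, hn₁.1.1⟩ : S) : WithTop S), ?_, rfl⟩, ((⟨t, ht⟩ : S) : WithTop S), ?_⟩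
    · simpa [← Subtype.val_inj] using hn₁.1.2.ne'
    · change _ = _ + _
      rw [← WithTop.coe_nsmul, ← WithTop.coe_add, WithTop.coe_inj, ← Subtype.val_inj]
      simp [hts]

lemma withTopBinoid_compl_frob_nplus {n₁ : ℕ} (hn₁ : IsLeast {m | m ∈ S ∧ 0 < m} n₁)
    (hq : ∀ m ∉ S, m < q) :
    ((withTopBinoid S).frob q (withTopBinoid S).nplus)ᶜ =
      (↑) '' (Subtype.val ⁻¹' aperySet S (q * n₁) : Set S) := by
  ext x
  cases x with
  | top => simp [withTopBinoid_top_mem_frob q withTopBinoid_top_mem_nplus]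
  | coe s => simp [withTopBinoid_coe_mem_frob_nplus_iff hn₁ hq, aperySet]

end NumericalSemigroup

theorem stmt17_general (S : AddSubmonoid ℕ)
    (n₁ : ℕ) (hn₁ : n₁ = sInf {m : ℕ | m ∈ S ∧ 0 < m})
    (q : ℕ) (hq : ∀ m : ℕ, m ∉ S → m < q) :
    (withTopBinoid (↥S)).hkf q = q * n₁ := by
  have hleast : IsLeast {m | m ∈ S ∧ 0 < m} n₁ := hn₁ ▸ isLeast_sInf_pos_of_gaps_lt hq
  have hgaps : ∀ m ∉ S, m < q * n₁ := fun m hm =>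
    (hq m hm).trans_le (Nat.le_mul_of_pos_right q hleast.1.2)
  have hcompl := withTopBinoid_compl_frob_nplus hleast hq
  have hfin : ((withTopBinoid S).frob q (withTopBinoid S).nplus)ᶜ.Finite := hcompl ▸
    ((finite_aperySet_of_gaps_lt hgaps).preimage Subtype.val_injective.injOn).image _
  have hS : aperySet S (q * n₁) ⊆ Set.range Subtype.val := fun m hm => ⟨⟨m, hm.1⟩, rfl⟩
  rw [BinoidOn.hkf, card_quotient_collapseSetoid
      ⟨⊤, withTopBinoid_top_mem_frob q withTopBinoid_top_mem_nplus⟩ hfin,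
    Nat.add_sub_cancel, hcompl, Nat.card_image_of_injective WithTop.coe_injective,
    Nat.card_preimage_of_injective Subtype.val_injective hS, card_aperySet_of_gaps_lt hgaps]

/-- Let `N` be a numerical semigroup (generated by positive
integers with gcd `1`), regarded as a binoid by adjoining `∞`, with smallest
positive element `n₁`.  For every integer `q` larger than every gap of `N`,
`#(N/[q]N₊) = q · n₁`. -/
theorem stmt17 (S : AddSubmonoid ℕ) (A : Finset ℕ) (hApos : ∀ a ∈ A, 0 < a)
    (hgcd : A.gcd id = 1) (hgen : S = AddSubmonoid.closure (A : Set ℕ))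
    (n₁ : ℕ) (hn₁ : n₁ = sInf {m : ℕ | m ∈ S ∧ 0 < m})
    (q : ℕ) (hq : ∀ m : ℕ, m ∉ S → m < q) :
    (withTopBinoid (↥S)).hkf q = q * n₁ :=
  stmt17_general S n₁ hn₁ q hq
end
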